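/- Let P be a non-trivial Q0-like k×k pattern, with s < t the rows of its leftmost and rightmost 1-entries. Then every occurrence of the 2×2 pattern ((0,1),(1,0)) in W(P) of height exactly k−1 (i.e., with top entry in row i_T and bottom entry in row i_B = i_T + k − 2) satisfies i_T < t < i_B; that is, the all-zero t-th row of W(P) lies strictly between its two entries. -/
import Mathlib


/-- A 0-1 matrix `M` contains a pattern `P` if there are strictly increasing row and
column index maps embedding the 1-entries of `P` into 1-entries of `M`. -/
def Contains {m n k l : ℕ} (M : Fin m → Fin n → Bool) (P : Fin k → Fin l → Bool) : Prop :=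
  ∃ r : Fin k → Fin m, ∃ c : Fin l → Fin n, StrictMono r ∧ StrictMono c ∧
    ∀ i j, P i j = true → M (r i) (c j) = true

def Avoids {m n k l : ℕ} (M : Fin m → Fin n → Bool) (P : Fin k → Fin l → Bool) : Prop :=
  ¬ Contains M P

/-- The matrix obtained from `M` by changing the entry at `(i, j)` to 1. -/
def SetOne {m n : ℕ} (M : Fin m → Fin n → Bool) (i : Fin m) (j : Fin n) :
    Fin m → Fin n → Bool :=
  fun i' j' => if i' = i ∧ j' = j then true else M i' j'

def ExpandableRow {m n k l : ℕ} (M : Fin m → Fin n → Bool) (P : Fin k → Fin l → Bool)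
    (i : Fin m) : Prop :=
  (∀ j, M i j = false) ∧ ∀ j, Contains (SetOne M i j) P

def ExpandableCol {m n k l : ℕ} (M : Fin m → Fin n → Bool) (P : Fin k → Fin l → Bool)
    (j : Fin n) : Prop :=
  (∀ i, M i j = false) ∧ ∀ i, Contains (SetOne M i j) P

def Saturated {m n k l : ℕ} (M : Fin m → Fin n → Bool) (P : Fin k → Fin l → Bool) : Prop :=
  Avoids M P ∧ ∀ i j, M i j = false → Contains (SetOne M i j) P

def IsWitness {m n k l : ℕ} (M : Fin m → Fin n → Bool) (P : Fin k → Fin l → Bool) : Prop :=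
  Avoids M P ∧ (∃ i, ExpandableRow M P i) ∧ (∃ j, ExpandableCol M P j)

def HorizontalWitness {m n k l : ℕ} (M : Fin m → Fin n → Bool)
    (P : Fin k → Fin l → Bool) : Prop :=
  Avoids M P ∧ ∃ j, ExpandableCol M P j

def VerticalWitness {m n k l : ℕ} (M : Fin m → Fin n → Bool)
    (P : Fin k → Fin l → Bool) : Prop :=
  Avoids M P ∧ ∃ i, ExpandableRow M P i

/-- `P` is once-separable: block form `((A,0),(0,B))` or `((0,A),(B,0))` with `A`, `B` nonzero. -/
def OnceSeparable {k l : ℕ} (P : Fin k → Fin l → Bool) : Prop :=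
  ∃ a b : ℕ, a ≤ k ∧ b ≤ l ∧
    (((∀ i j, P i j = true → ((i.val < a ∧ j.val < b) ∨ (a ≤ i.val ∧ b ≤ j.val))) ∧
      (∃ i j, i.val < a ∧ j.val < b ∧ P i j = true) ∧
      (∃ i j, a ≤ i.val ∧ b ≤ j.val ∧ P i j = true)) ∨
     ((∀ i j, P i j = true → ((i.val < a ∧ b ≤ j.val) ∨ (a ≤ i.val ∧ j.val < b))) ∧
      (∃ i j, i.val < a ∧ b ≤ j.val ∧ P i j = true) ∧
      (∃ i j, a ≤ i.val ∧ j.val < b ∧ P i j = true)))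

def NoEmptyRowCol {k l : ℕ} (P : Fin k → Fin l → Bool) : Prop :=
  (∀ i, ∃ j, P i j = true) ∧ (∀ j, ∃ i, P i j = true)

def IsPermMatrix {k : ℕ} (P : Fin k → Fin k → Bool) : Prop :=
  (∀ i, ∃! j, P i j = true) ∧ (∀ j, ∃! i, P i j = true)

/-- `P` is non-trivial: it has a row whose only 1-entry is leftmost, a row whose only
1-entry is rightmost, a column whose only 1-entry is topmost, and a column whose only
1-entry is bottommost. -/
def NonTrivial {k l : ℕ} (P : Fin k → Fin l → Bool) : Prop :=
  (∃ i, ∀ j, (P i j = true ↔ j.val = 0)) ∧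
  (∃ i, ∀ j, (P i j = true ↔ j.val = l - 1)) ∧
  (∃ j, ∀ i, (P i j = true ↔ i.val = 0)) ∧
  (∃ j, ∀ i, (P i j = true ↔ i.val = k - 1))

/-- The two-copy witness construction `W(P)` (0-based indices; `s < t` are the 0-based
rows of the leftmost and rightmost 1-entries of `P`). -/
def WP {k : ℕ} (P : Fin k → Fin k → Bool) (s t : ℕ) :
    Fin (k + (t - s)) → Fin (2 * k - 2) → Bool :=
  fun i j =>
    if h : j.val < k - 1 ∧ i.val < k then P ⟨i.val, h.2⟩ ⟨j.val, by omega⟩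
    else if h2 : k - 1 ≤ j.val ∧ t - s ≤ i.val ∧ i.val - (t - s) < k ∧ j.val - (k - 2) < k then
      P ⟨i.val - (t - s), h2.2.2.1⟩ ⟨j.val - (k - 2), h2.2.2.2⟩
    else false

lemma wp_cases {k : ℕ} (P : Fin k → Fin k → Bool) (s t : ℕ)
    (i : Fin (k + (t - s))) (j : Fin (2 * k - 2)) (h : WP P s t i j = true) :
    (∃ (h1 : j.val < k - 1) (h2 : i.val < k), P ⟨i.val, h2⟩ ⟨j.val, by omega⟩ = true) ∨
    (∃ (h1 : k - 1 ≤ j.val) (h2 : i.val - (t - s) < k) (h3 : j.val - (k - 2) < k),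
      t - s ≤ i.val ∧ P ⟨i.val - (t - s), h2⟩ ⟨j.val - (k - 2), h3⟩ = true) := by
  unfold WP at h
  split_ifs at h with h1 h2
  · exact Or.inl ⟨h1.1, h1.2, h⟩
  · exact Or.inr ⟨h2.1, h2.2.2.1, h2.2.2.2, h2.2.1, h⟩

theorem stmt12 {k : ℕ} (P : Fin k → Fin k → Bool) (a b s t : ℕ)
    (hs : 0 < s) (hst : s < t) (htk : t < k - 1)
    (ha : 0 < a) (hab : a < b) (hbk : b < k - 1)
    (hnt : NonTrivial P) (hP : NoEmptyRowCol P)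
    (hrow0 : ∀ j : Fin k, (P ⟨0, by omega⟩ j = true ↔ j.val = a))
    (hrowlast : ∀ j : Fin k, (P ⟨k - 1, by omega⟩ j = true ↔ j.val = b))
    (hcol0 : ∀ i : Fin k, (P i ⟨0, by omega⟩ = true ↔ i.val = s))
    (hcollast : ∀ i : Fin k, (P i ⟨k - 1, by omega⟩ = true ↔ i.val = t)) :
    ∀ (iB iT : Fin (k + (t - s))) (jB jT : Fin (2 * k - 2)),
      WP P s t iT jT = true → WP P s t iB jB = true →
      iT < iB → jB < jT → iB.val = iT.val + (k - 2) →
      iT.val < t ∧ t < iB.val := by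
  -- row `s` of `P` has its only 1-entry in column 0,
  -- row `t` of `P` has its only 1-entry in column k-1
  have hk4 : 4 ≤ k := by omega
  obtain ⟨⟨i1, h1⟩, ⟨i2, h2⟩, -, -⟩ := hnt
  have hi1 : i1.val = s := (hcol0 i1).mp ((h1 ⟨0, by omega⟩).mpr rfl)
  have hi2 : i2.val = t := (hcollast i2).mp ((h2 ⟨k - 1, by omega⟩).mpr rfl)
  have hrows : ∀ (i j : Fin k), i.val = s → P i j = true → j.val = 0 := by
    intro i j hi hij
    have : i = i1 := Fin.ext (by omega)
    exact (h1 j).mp (this ▸ hij)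
  have hrowt : ∀ (i j : Fin k), i.val = t → P i j = true → j.val = k - 1 := by
    intro i j hi hij
    have : i = i2 := Fin.ext (by omega)
    exact (h2 j).mp (this ▸ hij)
  intro iB iT jB jT hT hB hlt hjlt hheight
  rcases wp_cases P s t iT jT hT with ⟨hjT, hiT, hPT⟩ | ⟨hjT, hiT, hjT', hiT', hPT⟩ <;>
    rcases wp_cases P s t iB jB hB with ⟨hjB, hiB, hPB⟩ | ⟨hjB, hiB, hjB', hiB', hPB⟩
  · -- both in left copy
    constructor
    · omega
    · by_cases hEq : iB.val = t
      · have := hrowt _ _ hEq hPB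
        simp only [Fin.val_mk] at this
        omega
      · omega
  · -- T left, B right: impossible since jB < jT
    omega
  · -- T right, B left: pure arithmetic
    omega
  · -- both in right copy
    constructor
    · by_cases hEq : iT.val - (t - s) = s
      · have := hrows _ _ hEq hPT
        simp only [Fin.val_mk] at this
        omega
      · omega
    · omega
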